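/- Let X be a T1 topological space with an almost proximity δ̂ satisfying (N5) and (N6). The canonical injection i : X → CL(X), i(x) = {x}, is a topological embedding when CL(X) carries the topology generated by the sets V^∧ = {E ∈ CL(X) : E δ̂ V} for V open in X (the strongly hit topology); indeed i is continuous and open onto its image, since i^{-1}(V^∧) = V and i(A) = A^∧ ∩ i(X) for every open A ⊆ X. -/
import Mathlib


open Set TopologicalSpace

/-- An almost proximity (strongly near proximity) on a topological space. -/
structure AlmostProximity (X : Type*) [TopologicalSpace X] where
  rel : Set X → Set X → Prop
  n0_empty : ∀ A : Set X, ¬ rel ∅ A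
  n0_univ : ∀ A : Set X, A.Nonempty → rel univ A
  n1 : ∀ A B : Set X, rel A B ↔ rel B A
  n2 : ∀ A B : Set X, rel A B → (A ∩ B).Nonempty
  n3 : ∀ A B C : Set X, (interior B).Nonempty → (interior C).Nonempty →
        (rel A B ∨ rel A C) → rel A (B ∪ C)
  n4 : ∀ A B : Set X, (interior A ∩ interior B).Nonempty → rel A B

/-- The hyperspace of nonempty closed subsets of `X`. -/
def CL (X : Type*) [TopologicalSpace X] : Type _ :=
  {E : Set X // E.Nonempty ∧ IsClosed E}

/-- The strongly hit topology on `CL X`, generated by the sets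
`V^∧ = {E ∈ CL X : E δ̂ V}` for `V` open. -/
def strongHitTopology (X : Type*) [TopologicalSpace X]
    (δ : AlmostProximity X) : TopologicalSpace (CL X) :=
  generateFrom {S : Set (CL X) |
    ∃ V : Set X, IsOpen V ∧ S = {E : CL X | δ.rel E.1 V}}

/-- For a T1 space `X` with an almost proximity satisfying (N5)
and (N6), the canonical injection `i : X → CL X`, `i x = {x}`, is a topological
embedding for the strongly hit topology; indeed `i⁻¹(V^∧) = V` and
`i '' A = A^∧ ∩ i(X)` for every open `A`. -/
theorem canonical_injection_embedding
    (X : Type*) [TopologicalSpace X] [T1Space X] (δ : AlmostProximity X)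
    (n5 : ∀ (x : X) (A : Set X), x ∈ interior A → δ.rel {x} A)
    (n6 : ∀ x y : X, δ.rel {x} {y} ↔ x = y)
    (i : X → CL X)
    (hi : ∀ x : X, (i x).1 = {x}) :
    (@Topology.IsEmbedding X (CL X) _ (strongHitTopology X δ) i) ∧
    (∀ V : Set X, IsOpen V → i ⁻¹' {E : CL X | δ.rel E.1 V} = V) ∧
    (∀ A : Set X, IsOpen A →
      i '' A = {E : CL X | δ.rel E.1 A} ∩ Set.range i) := by
  have key : ∀ V : Set X, IsOpen V → ∀ x : X, δ.rel (i x).1 V ↔ x ∈ V := by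
    intro V hV x
    rw [hi]
    constructor
    · intro h
      obtain ⟨y, hy1, hy2⟩ := δ.n2 _ _ h
      rwa [mem_singleton_iff.mp hy1] at hy2
    · intro hx
      exact n5 x V (by rwa [hV.interior_eq])
  have hpre : ∀ V : Set X, IsOpen V → i ⁻¹' {E : CL X | δ.rel E.1 V} = V := by
    intro V hV
    ext x
    simp [key V hV x]
  have hinj : Function.Injective i := by
    intro x y hxy
    have : ({x} : Set X) = {y} := by rw [← hi x, ← hi y, hxy]
    exact singleton_eq_singleton_iff.mp this
  letI := strongHitTopology X δ
  refine ⟨⟨⟨?_⟩, hinj⟩, hpre, ?_⟩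
  · -- inducing
    show ‹TopologicalSpace X› = TopologicalSpace.induced i (strongHitTopology X δ)
    rw [strongHitTopology, induced_generateFrom_eq]
    have : preimage i '' {S : Set (CL X) |
        ∃ V : Set X, IsOpen V ∧ S = {E : CL X | δ.rel E.1 V}} = {V : Set X | IsOpen V} := by
      ext U
      constructor
      · rintro ⟨S, ⟨V, hV, rfl⟩, rfl⟩
        rw [hpre V hV]; exact hV
      · intro hU
        exact ⟨{E : CL X | δ.rel E.1 U}, ⟨U, hU, rfl⟩, hpre U hU⟩
    rw [this, generateFrom_setOf_isOpen]
  · intro A hA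
    ext E
    constructor
    · rintro ⟨x, hx, rfl⟩
      exact ⟨(key A hA x).mpr hx, mem_range_self x⟩
    · rintro ⟨hE, x, rfl⟩
      exact ⟨x, (key A hA x).mp hE, rfl⟩
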